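/- arXiv:1705.00702 — 2 statements merged into one kernel-verified Lean document; each statement's English description precedes it below -/
import Mathlib

section
/- For each ε > 0 and d ∈ ℝ, every (PS)_d sequence {u_n} for J_ε (i.e. J_ε(u_n) → d and J_ε′(u_n) → 0 in the dual of H_ε) is bounded in H_ε; more precisely, there is a constant C with (ϑ−2)/(2ϑ) · (m₀ − 1/K) · ‖u_n‖_ε² ≤ C + ‖u_n‖_ε for all n. -/
noncomputable section

open MeasureTheory Filter Topology Set Metric
open scoped Classical

/-- Euclidean space `ℝ³`. -/
abbrev E3 := EuclideanSpace ℝ (Fin 3)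

/-- Finiteness of the squared Gagliardo seminorm `[u]² < ∞`. -/
def GagliardoFinite (s : ℝ) (u : E3 → ℝ) : Prop :=
  MeasureTheory.Integrable
    (fun p : E3 × E3 => (u p.1 - u p.2) ^ 2 / ‖p.1 - p.2‖ ^ (3 + 2 * s)) volume

/-- Membership in the fractional Sobolev space `H^s(ℝ³)`. -/
def MemHs (s : ℝ) (u : E3 → ℝ) : Prop :=
  MeasureTheory.MemLp u 2 volume ∧ GagliardoFinite s u

/-- The Gagliardo bilinear form
`∬ (u(x)-u(y))(v(x)-v(y))/|x-y|^{3+2s} dx dy`. -/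
def fracInner (s : ℝ) (u v : E3 → ℝ) : ℝ :=
  ∫ x : E3, ∫ y : E3, (u x - u y) * (v x - v y) / ‖x - y‖ ^ (3 + 2 * s)

/-- The squared Gagliardo seminorm `[u]²`. -/
def gagliardoSq (s : ℝ) (u : E3 → ℝ) : ℝ := fracInner s u u

/-- Membership in `H_ε = {u ∈ H^s : ∫ V(εx)u² < ∞}`. -/
def MemHe (s : ℝ) (V : E3 → ℝ) (ε : ℝ) (u : E3 → ℝ) : Prop :=
  MemHs s u ∧ MeasureTheory.Integrable (fun x : E3 => V (ε • x) * u x ^ 2) volume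

/-- The inner product `(u,v)_ε` of `H_ε`. -/
def innerE (s : ℝ) (V : E3 → ℝ) (ε : ℝ) (u v : E3 → ℝ) : ℝ :=
  fracInner s u v + ∫ x : E3, V (ε • x) * u x * v x

/-- The squared norm `‖u‖_ε²` of `H_ε`. -/
def normSqE (s : ℝ) (V : E3 → ℝ) (ε : ℝ) (u : E3 → ℝ) : ℝ := innerE s V ε u u

/-- `M̂(t) = ∫₀ᵗ M(τ) dτ`. -/
def Mhat (M : ℝ → ℝ) (t : ℝ) : ℝ := ∫ τ in (0:ℝ)..t, M τ

/-- `F(t) = ∫₀ᵗ f(τ) dτ`. -/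
def Fprim (f : ℝ → ℝ) (t : ℝ) : ℝ := ∫ τ in (0:ℝ)..t, f τ

/-- The truncation `f̃` of the penalization scheme. -/
def ftil (f : ℝ → ℝ) (V₀ K a t : ℝ) : ℝ := if t ≤ a then f t else V₀ / K * t

/-- The penalized nonlinearity `g(x,t) = χ_Ω(x) f(t) + (1-χ_Ω(x)) f̃(t)`. -/
def gpen (Ω : Set E3) (f : ℝ → ℝ) (V₀ K a : ℝ) (x : E3) (t : ℝ) : ℝ :=
  if x ∈ Ω then f t else ftil f V₀ K a t

/-- `G(x,t) = ∫₀ᵗ g(x,τ) dτ`. -/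
def Gpen (Ω : Set E3) (f : ℝ → ℝ) (V₀ K a : ℝ) (x : E3) (t : ℝ) : ℝ :=
  ∫ τ in (0:ℝ)..t, gpen Ω f V₀ K a x τ

/-- The penalized energy functional `J_ε`. -/
def Je (s : ℝ) (M : ℝ → ℝ) (V : E3 → ℝ) (Ω : Set E3) (f : ℝ → ℝ)
    (V₀ K a ε : ℝ) (u : E3 → ℝ) : ℝ :=
  1 / 2 * Mhat M (normSqE s V ε u) - ∫ x : E3, Gpen Ω f V₀ K a (ε • x) (u x)

/-- The pairing `⟨J_ε'(u), φ⟩`. -/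
def JeDeriv (s : ℝ) (M : ℝ → ℝ) (V : E3 → ℝ) (Ω : Set E3) (f : ℝ → ℝ)
    (V₀ K a ε : ℝ) (u φ : E3 → ℝ) : ℝ :=
  M (normSqE s V ε u) * innerE s V ε u φ - ∫ x : E3, gpen Ω f V₀ K a (ε • x) (u x) * φ x

/-- The Nehari manifold `N_ε = {u ∈ H_ε \ {0} : ⟨J_ε'(u), u⟩ = 0}`. -/
def MemNehariE (s : ℝ) (M : ℝ → ℝ) (V : E3 → ℝ) (Ω : Set E3) (f : ℝ → ℝ)
    (V₀ K a ε : ℝ) (u : E3 → ℝ) : Prop :=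
  MemHe s V ε u ∧ u ≠ 0 ∧ JeDeriv s M V Ω f V₀ K a ε u u = 0

/-- `H_ε⁺ = {u ∈ H_ε : |supp(u⁺) ∩ Ω_ε| > 0}`. -/
def MemHePlus (s : ℝ) (V : E3 → ℝ) (Ω : Set E3) (ε : ℝ) (u : E3 → ℝ) : Prop :=
  MemHe s V ε u ∧ 0 < volume ({x : E3 | 0 < u x} ∩ {x : E3 | ε • x ∈ Ω})

/-- Strong convergence in `H_ε`. -/
def TendstoE (s : ℝ) (V : E3 → ℝ) (ε : ℝ) (u : ℕ → E3 → ℝ) (v : E3 → ℝ) : Prop :=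
  Tendsto (fun n => normSqE s V ε (fun x => u n x - v x)) atTop (𝓝 0)

/-- `(PS)_d` sequence for `J_ε`: `J_ε(u_n) → d` and `J_ε'(u_n) → 0` in the dual of `H_ε`. -/
def PSSeqE (s : ℝ) (M : ℝ → ℝ) (V : E3 → ℝ) (Ω : Set E3) (f : ℝ → ℝ)
    (V₀ K a ε d : ℝ) (u : ℕ → E3 → ℝ) : Prop :=
  (∀ n, MemHe s V ε (u n)) ∧
  Tendsto (fun n => Je s M V Ω f V₀ K a ε (u n)) atTop (𝓝 d) ∧
  ∀ η > (0:ℝ), ∃ N : ℕ, ∀ n ≥ N, ∀ φ : E3 → ℝ, MemHe s V ε φ → normSqE s V ε φ ≤ 1 →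
    |JeDeriv s M V Ω f V₀ K a ε (u n) φ| ≤ η

/-- Inner product of the autonomous space `H₀`. -/
def innerO (s V₀ : ℝ) (u v : E3 → ℝ) : ℝ :=
  fracInner s u v + ∫ x : E3, V₀ * u x * v x

/-- Squared norm `‖u‖₀²` of the autonomous space. -/
def normSqO (s V₀ : ℝ) (u : E3 → ℝ) : ℝ := innerO s V₀ u u

/-- The autonomous energy functional `J₀`. -/
def J0 (s : ℝ) (M : ℝ → ℝ) (V₀ : ℝ) (f : ℝ → ℝ) (u : E3 → ℝ) : ℝ :=
  1 / 2 * Mhat M (normSqO s V₀ u) - ∫ x : E3, Fprim f (u x)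

/-- The pairing `⟨J₀'(u), φ⟩`. -/
def J0Deriv (s : ℝ) (M : ℝ → ℝ) (V₀ : ℝ) (f : ℝ → ℝ) (u φ : E3 → ℝ) : ℝ :=
  M (normSqO s V₀ u) * innerO s V₀ u φ - ∫ x : E3, f (u x) * φ x

/-- The autonomous Nehari manifold `N₀`. -/
def MemNehari0 (s : ℝ) (M : ℝ → ℝ) (V₀ : ℝ) (f : ℝ → ℝ) (u : E3 → ℝ) : Prop :=
  MemHs s u ∧ u ≠ 0 ∧ J0Deriv s M V₀ f u u = 0

/-- The autonomous ground-state level `c₀ = inf_{N₀} J₀`. -/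
def c0lvl (s : ℝ) (M : ℝ → ℝ) (V₀ : ℝ) (f : ℝ → ℝ) : ℝ :=
  sInf (J0 s M V₀ f '' {u | MemNehari0 s M V₀ f u})

/-- `A` is contractible inside `X`: the inclusion `A ↪ X` is null-homotopic. -/
def ContractibleIn (A X : Set E3) : Prop :=
  A ⊆ X ∧ ∃ x₀ ∈ X, ∃ H : ℝ × E3 → E3,
    ContinuousOn H (Icc (0:ℝ) 1 ×ˢ A) ∧
    (∀ t ∈ Icc (0:ℝ) 1, ∀ a ∈ A, H (t, a) ∈ X) ∧
    (∀ a ∈ A, H (0, a) = a) ∧ (∀ a ∈ A, H (1, a) = x₀)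

/-- The Ljusternik–Schnirelmann category `cat_X(Y)`: the least number of closed
contractible (in `X`) subsets of `X` covering `Y`. -/
def lsCat (X Y : Set E3) : ℕ :=
  sInf {n : ℕ | ∃ C : Fin n → Set E3, (∀ i, IsClosed (C i)) ∧
    (∀ i, ContractibleIn (C i) X) ∧ Y ⊆ ⋃ i, C i}


/-- Strong convergence in the autonomous space `H₀`. -/
def TendstoO (s V₀ : ℝ) (u : ℕ → E3 → ℝ) (v : E3 → ℝ) : Prop :=
  Tendsto (fun n => normSqO s V₀ (fun x => u n x - v x)) atTop (𝓝 0)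

/-- `(PS)_d` sequence for the autonomous functional `J₀`. -/
def PSSeq0 (s : ℝ) (M : ℝ → ℝ) (V₀ : ℝ) (f : ℝ → ℝ) (d : ℝ) (u : ℕ → E3 → ℝ) : Prop :=
  (∀ n, MemHs s (u n)) ∧
  Tendsto (fun n => J0 s M V₀ f (u n)) atTop (𝓝 d) ∧
  ∀ η > (0:ℝ), ∃ N : ℕ, ∀ n ≥ N, ∀ φ : E3 → ℝ, MemHs s φ → normSqO s V₀ φ ≤ 1 →
    |J0Deriv s M V₀ f (u n) φ| ≤ η

/-- The function `Ψ_{ε,y}(x) = η(|εx - y|) w((εx - y)/ε)`. -/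
def PsiFn (η : ℝ → ℝ) (w : E3 → ℝ) (ε : ℝ) (y x : E3) : ℝ :=
  η ‖ε • x - y‖ * w (ε⁻¹ • (ε • x - y))

/-- The truncation map `Υ` used in the barycenter. -/
def UpsilonMap (ρ : ℝ) (x : E3) : E3 := if ‖x‖ < ρ then x else (ρ / ‖x‖) • x

/-- The barycenter map `β_ε(u) = (∫ Υ(εx) u² dx) / (∫ u² dx)`. -/
def bary (ρ ε : ℝ) (u : E3 → ℝ) : E3 :=
  (∫ x : E3, u x ^ 2)⁻¹ • ∫ x : E3, u x ^ 2 • UpsilonMap ρ (ε • x)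

/-- Weak solution of the original problem
`M(ε^{2s-3}[u]² + ε^{-3}∫V u²)[ε^{2s}(-Δ)^s u + V(x)u] = f(u)` in `ℝ³`. -/
def IsSolutionOrig (s : ℝ) (M : ℝ → ℝ) (V : E3 → ℝ) (f : ℝ → ℝ) (ε : ℝ)
    (u : E3 → ℝ) : Prop :=
  MemHs s u ∧ MeasureTheory.Integrable (fun x : E3 => V x * u x ^ 2) volume ∧
  ∀ φ : E3 → ℝ, MemHs s φ →
    MeasureTheory.Integrable (fun x : E3 => V x * φ x ^ 2) volume →
    M (ε ^ (2 * s - 3) * gagliardoSq s u + ε ^ (-3 : ℝ) * ∫ x : E3, V x * u x ^ 2) *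
        (ε ^ (2 * s) * fracInner s u φ + ∫ x : E3, V x * u x * φ x)
      = ∫ x : E3, f (u x) * φ x


/-!
Testing `J_ε'(u_n) → 0` against `u_n / ‖u_n‖_ε` gives `|⟨J_ε'(u_n), u_n⟩| ≤ ‖u_n‖_ε` for
large `n`, while `J_ε(u_n) ≤ d + 1`. The two combine through the Ambrosetti–Rabinowitz-type
estimate `ϑ J_ε(u) - ⟨J_ε'(u), u⟩ ≥ (ϑ-2)/2 (m₀ - 1/K) ‖u‖_ε²`. Its Kirchhoff part comes from
(M3), which makes `(M(τ) - m₀)/τ` nonincreasing and hence `M̂(t) ≥ (m₀ + M(t)) t / 2`; its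
nonlinear part is `ϑ G(x,t) ≤ g(x,t) t + (ϑ-2)/2 (V₀/K) t²`, whose error term is needed only
off `Ω` above the cut-off `a`, where `g(x,t) = (V₀/K) t`. As `K > 2/m₀`, the resulting
`c ‖u_n‖_ε² ≤ C + ‖u_n‖_ε` has `c > 0`, which bounds `‖u_n‖_ε`.
-/

lemma exists_forall_le_add_of_eventually_le {a b : ℕ → ℝ} {A : ℝ}
    (h : ∀ᶠ n in atTop, a n ≤ A + b n) : ∃ C, ∀ n, a n ≤ C + b n := by
  obtain ⟨C, hC⟩ := (isBoundedUnder_of_eventually_le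
    (h.mono fun n hn => sub_le_iff_le_add.2 hn)).bddAbove_range
  exact ⟨C, fun n => sub_le_iff_le_add.1 (hC ⟨n, rfl⟩)⟩

lemma le_of_mul_le_add_sqrt {c C x : ℝ} (hc : 0 < c) (hx : 0 ≤ x)
    (h : c * x ≤ C + √x) : x ≤ (2 * c * C + 1) / c ^ 2 := by
  rw [le_div_iff₀ (by positivity)]
  obtain ⟨r, hr, rfl⟩ : ∃ r, 0 ≤ r ∧ x = r ^ 2 :=
    ⟨√x, Real.sqrt_nonneg x, (Real.sq_sqrt hx).symm⟩
  rw [Real.sqrt_sq hr] at h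
  nlinarith [sq_nonneg (c * r - 1)]

section HilbertSpace

lemma fracInner_self_nonneg (s : ℝ) (u : E3 → ℝ) : 0 ≤ fracInner s u u :=
  integral_nonneg fun _ => integral_nonneg fun _ =>
    div_nonneg (mul_self_nonneg _) (Real.rpow_nonneg (norm_nonneg _) _)

lemma fracInner_const_mul_left (s c : ℝ) (u v : E3 → ℝ) :
    fracInner s (fun x => c * u x) v = c * fracInner s u v := by
  simp only [fracInner, ← integral_const_mul]
  exact congrArg _ (funext fun x => congrArg _ (funext fun y => by ring))

lemma fracInner_const_mul_right (s c : ℝ) (u v : E3 → ℝ) :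
    fracInner s u (fun x => c * v x) = c * fracInner s u v := by
  simp only [fracInner, ← integral_const_mul]
  exact congrArg _ (funext fun x => congrArg _ (funext fun y => by ring))

variable {s : ℝ} {V : E3 → ℝ} {ε : ℝ}

lemma innerE_const_mul_left (c : ℝ) (u v : E3 → ℝ) :
    innerE s V ε (fun x => c * u x) v = c * innerE s V ε u v := by
  simp only [innerE, fracInner_const_mul_left, mul_add, ← integral_const_mul]
  congr! 3 with x
  ring

lemma innerE_const_mul_right (c : ℝ) (u v : E3 → ℝ) :
    innerE s V ε u (fun x => c * v x) = c * innerE s V ε u v := by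
  simp only [innerE, fracInner_const_mul_right, mul_add, ← integral_const_mul]
  congr! 3 with x
  ring

lemma normSqE_const_mul (c : ℝ) (u : E3 → ℝ) :
    normSqE s V ε (fun x => c * u x) = c ^ 2 * normSqE s V ε u := by
  simp only [normSqE, innerE_const_mul_left, innerE_const_mul_right]
  ring

lemma normSqE_eq (u : E3 → ℝ) :
    normSqE s V ε u = fracInner s u u + ∫ x, V (ε • x) * u x ^ 2 := by
  simp only [normSqE, innerE, mul_assoc, sq]

lemma integral_mul_sq_le_normSqE (u : E3 → ℝ) :
    ∫ x, V (ε • x) * u x ^ 2 ≤ normSqE s V ε u := by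
  rw [normSqE_eq]
  linarith [fracInner_self_nonneg s u]

lemma normSqE_nonneg (hV : ∀ x, 0 ≤ V x) (u : E3 → ℝ) : 0 ≤ normSqE s V ε u := by
  rw [normSqE_eq]
  exact add_nonneg (fracInner_self_nonneg s u)
    (integral_nonneg fun x => mul_nonneg (hV _) (sq_nonneg _))

lemma MemHe.const_mul {u : E3 → ℝ} (hu : MemHe s V ε u) (c : ℝ) :
    MemHe s V ε (fun x => c * u x) := by
  obtain ⟨⟨hL2, hgag⟩, hV⟩ := hu
  refine ⟨⟨hL2.const_mul c, (hgag.const_mul (c ^ 2)).congr (.of_forall fun p => ?_)⟩,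
    (hV.const_mul (c ^ 2)).congr (.of_forall fun x => ?_)⟩ <;> simp only <;> ring

end HilbertSpace

section Penalization

variable {Ω : Set E3} {f : ℝ → ℝ} {V₀ K a ϑ t : ℝ}

lemma f_nonneg (hfneg : ∀ t ≤ (0:ℝ), f t = 0)
    (hf3 : ∀ t : ℝ, 0 < t → 0 < ϑ * Fprim f t ∧ ϑ * Fprim f t ≤ f t * t) (t : ℝ) :
    0 ≤ f t := by
  rcases le_or_gt t 0 with ht | ht
  · exact (hfneg t ht).ge
  · obtain ⟨hpos, hle⟩ := hf3 t ht
    nlinarith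

lemma Fprim_of_nonpos (hfneg : ∀ t ≤ (0:ℝ), f t = 0) (ht : t ≤ 0) : Fprim f t = 0 := by
  rw [Fprim, intervalIntegral.integral_congr (g := fun _ => (0:ℝ)), intervalIntegral.integral_zero]
  intro τ hτ
  rw [uIcc_of_ge ht] at hτ
  exact hfneg τ hτ.2

lemma Fprim_nonneg (hfneg : ∀ t ≤ (0:ℝ), f t = 0)
    (hf3 : ∀ t : ℝ, 0 < t → 0 < ϑ * Fprim f t ∧ ϑ * Fprim f t ≤ f t * t) (t : ℝ) :
    0 ≤ Fprim f t := by
  rcases le_or_gt t 0 with ht | ht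
  · exact (Fprim_of_nonpos hfneg ht).ge
  · exact intervalIntegral.integral_nonneg ht.le fun τ _ => f_nonneg hfneg hf3 τ

lemma mul_Fprim_le (hfneg : ∀ t ≤ (0:ℝ), f t = 0)
    (hf3 : ∀ t : ℝ, 0 < t → 0 < ϑ * Fprim f t ∧ ϑ * Fprim f t ≤ f t * t) (t : ℝ) :
    ϑ * Fprim f t ≤ f t * t := by
  rcases le_or_gt t 0 with ht | ht
  · simp [Fprim_of_nonpos hfneg ht, hfneg t ht]
  · exact (hf3 t ht).2

lemma continuous_ftil (hfcont : Continuous f) (hfa : f a = V₀ / K * a) :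
    Continuous (ftil f V₀ K a) :=
  Continuous.if_le hfcont (continuous_const.mul continuous_id) continuous_id
    continuous_const fun t ht => by rw [ht, hfa]

lemma integral_ftil_of_le (ha : 0 ≤ a) (ht : t ≤ a) :
    ∫ τ in (0:ℝ)..t, ftil f V₀ K a τ = Fprim f t := by
  refine intervalIntegral.integral_congr fun τ hτ => if_pos ?_
  rcases le_total 0 t with h0 | h0
  · rw [uIcc_of_le h0] at hτ; exact hτ.2.trans ht
  · rw [uIcc_of_ge h0] at hτ; exact hτ.2.trans ha

lemma integral_ftil_of_lt (hfcont : Continuous f) (hfa : f a = V₀ / K * a) (ha : 0 ≤ a)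
    (ht : a < t) :
    ∫ τ in (0:ℝ)..t, ftil f V₀ K a τ = Fprim f a + V₀ / K * ((t ^ 2 - a ^ 2) / 2) := by
  have hint := (continuous_ftil hfcont hfa).intervalIntegrable (μ := volume)
  rw [← intervalIntegral.integral_add_adjacent_intervals (hint 0 a) (hint a t),
    integral_ftil_of_le ha le_rfl, ← integral_id, ← intervalIntegral.integral_const_mul]
  congr 1
  refine intervalIntegral.integral_congr fun τ hτ => ?_
  rw [uIcc_of_le ht.le] at hτ
  rcases hτ.1.eq_or_lt with rfl | h
  · simp [ftil, hfa]
  · simp [ftil, not_le.2 h]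

lemma Gpen_of_mem_or_le (ha : 0 ≤ a) {x : E3} (hx : x ∈ Ω ∨ t ≤ a) :
    Gpen Ω f V₀ K a x t = Fprim f t ∧ gpen Ω f V₀ K a x t = f t := by
  by_cases hxΩ : x ∈ Ω
  · simp [Gpen, gpen, Fprim, hxΩ]
  · have hta := hx.resolve_left hxΩ
    simp only [Gpen, gpen, if_neg hxΩ]
    exact ⟨integral_ftil_of_le ha hta, if_pos hta⟩

lemma Gpen_of_notMem_of_lt (hfcont : Continuous f) (hfa : f a = V₀ / K * a) (ha : 0 ≤ a)
    {x : E3} (hx : x ∉ Ω) (ht : a < t) :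
    Gpen Ω f V₀ K a x t = Fprim f a + V₀ / K * ((t ^ 2 - a ^ 2) / 2) ∧
      gpen Ω f V₀ K a x t = V₀ / K * t := by
  simp only [Gpen, gpen, if_neg hx]
  exact ⟨integral_ftil_of_lt hfcont hfa ha ht, if_neg (not_le.2 ht)⟩

lemma Gpen_nonneg (hfcont : Continuous f) (hfneg : ∀ t ≤ (0:ℝ), f t = 0)
    (hf3 : ∀ t : ℝ, 0 < t → 0 < ϑ * Fprim f t ∧ ϑ * Fprim f t ≤ f t * t)
    (hfa : f a = V₀ / K * a) (ha : 0 ≤ a) (hVK : 0 ≤ V₀ / K) (x : E3) (t : ℝ) :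
    0 ≤ Gpen Ω f V₀ K a x t := by
  by_cases hx : x ∈ Ω ∨ t ≤ a
  · rw [(Gpen_of_mem_or_le ha hx).1]
    exact Fprim_nonneg hfneg hf3 t
  · rw [not_or, not_le] at hx
    rw [(Gpen_of_notMem_of_lt hfcont hfa ha hx.1 hx.2).1]
    have hat : a ^ 2 ≤ t ^ 2 := pow_le_pow_left₀ ha hx.2.le 2
    exact add_nonneg (Fprim_nonneg hfneg hf3 a)
      (mul_nonneg hVK (div_nonneg (sub_nonneg.2 hat) zero_le_two))

lemma mul_Gpen_le (hfcont : Continuous f) (hfneg : ∀ t ≤ (0:ℝ), f t = 0)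
    (hf3 : ∀ t : ℝ, 0 < t → 0 < ϑ * Fprim f t ∧ ϑ * Fprim f t ≤ f t * t)
    (hfa : f a = V₀ / K * a) (ha : 0 ≤ a) (hVK : 0 ≤ V₀ / K) (hϑ : 2 ≤ ϑ)
    (x : E3) (t : ℝ) :
    ϑ * Gpen Ω f V₀ K a x t ≤ gpen Ω f V₀ K a x t * t + (ϑ - 2) / 2 * (V₀ / K) * t ^ 2 := by
  by_cases hx : x ∈ Ω ∨ t ≤ a
  · obtain ⟨hG, hg⟩ := Gpen_of_mem_or_le ha hx
    rw [hG, hg]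
    have herr : 0 ≤ (ϑ - 2) / 2 * (V₀ / K) * t ^ 2 := by
      have := sub_nonneg.2 hϑ
      positivity
    linarith [mul_Fprim_le hfneg hf3 t]
  · rw [not_or, not_le] at hx
    obtain ⟨hG, hg⟩ := Gpen_of_notMem_of_lt hfcont hfa ha hx.1 hx.2
    rw [hG, hg]
    have hFa := mul_Fprim_le hfneg hf3 a
    rw [hfa] at hFa
    nlinarith [mul_nonneg (mul_nonneg (sub_nonneg.2 hϑ) hVK) (sq_nonneg a)]

end Penalization

section Kirchhoff

variable {M : ℝ → ℝ} {m₀ : ℝ}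

lemma chord_le (hM3 : ∀ t₁ t₂ : ℝ, 0 < t₂ → t₂ ≤ t₁ →
      M t₁ / t₁ - M t₂ / t₂ ≤ m₀ * (1 / t₁ - 1 / t₂))
    {τ t : ℝ} (hτ : 0 < τ) (hτt : τ ≤ t) : m₀ + (M t - m₀) / t * τ ≤ M τ := by
  have ht : 0 < t := hτ.trans_le hτt
  have h := hM3 t τ hτ hτt
  rw [← sub_nonneg] at h ⊢
  have key : M τ - (m₀ + (M t - m₀) / t * τ)
      = τ * (m₀ * (1 / t - 1 / τ) - (M t / t - M τ / τ)) := by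
    field_simp
    ring
  rw [key]
  exact mul_nonneg hτ.le h

lemma trapezoid_le_Mhat (hMcont : Continuous M)
    (hM3 : ∀ t₁ t₂ : ℝ, 0 < t₂ → t₂ ≤ t₁ →
      M t₁ / t₁ - M t₂ / t₂ ≤ m₀ * (1 / t₁ - 1 / t₂))
    {t : ℝ} (ht : 0 ≤ t) : m₀ * t / 2 + M t * t / 2 ≤ Mhat M t := by
  rcases ht.eq_or_lt with rfl | ht
  · simp [Mhat]
  have hchord : ∫ τ in (0:ℝ)..t, (m₀ + (M t - m₀) / t * τ) = m₀ * t / 2 + M t * t / 2 := by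
    rw [intervalIntegral.integral_add intervalIntegrable_const
      (intervalIntegral.intervalIntegrable_id.const_mul _), intervalIntegral.integral_const,
      intervalIntegral.integral_const_mul, integral_id]
    field_simp
    ring
  rw [← hchord]
  exact intervalIntegral.integral_mono_on_of_le_Ioo ht.le
    ((continuous_const.add (continuous_const.mul continuous_id)).intervalIntegrable _ _)
    (hMcont.intervalIntegrable _ _) fun τ hτ => chord_le hM3 hτ.1 hτ.2.le

lemma le_mul_Mhat_sub_mul (hMcont : Continuous M) (hM1 : ∀ t : ℝ, 0 ≤ t → m₀ ≤ M t)
    (hM3 : ∀ t₁ t₂ : ℝ, 0 < t₂ → t₂ ≤ t₁ →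
      M t₁ / t₁ - M t₂ / t₂ ≤ m₀ * (1 / t₁ - 1 / t₂))
    {ϑ t : ℝ} (hϑ : 4 ≤ ϑ) (ht : 0 ≤ t) :
    (ϑ - 2) / 2 * m₀ * t ≤ ϑ / 2 * Mhat M t - M t * t := by
  have hMhat := trapezoid_le_Mhat hMcont hM3 ht
  have hMt : (ϑ - 4) * m₀ * t ≤ (ϑ - 4) * M t * t := by
    have := sub_nonneg.2 hϑ
    gcongr
    exact hM1 t ht
  nlinarith

end Kirchhoff

section Functional

variable {s : ℝ} {M : ℝ → ℝ} {m₀ : ℝ} {V : E3 → ℝ} {Ω : Set E3} {f : ℝ → ℝ}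
  {V₀ K a ϑ ε : ℝ} {u : E3 → ℝ}

lemma JeDeriv_const_mul_right (c : ℝ) (u φ : E3 → ℝ) :
    JeDeriv s M V Ω f V₀ K a ε u (fun x => c * φ x) = c * JeDeriv s M V Ω f V₀ K a ε u φ := by
  simp only [JeDeriv, innerE_const_mul_right, mul_left_comm _ c, integral_const_mul]
  ring

lemma abs_JeDeriv_self_le {η : ℝ} (hV : ∀ x, 0 ≤ V x) (hu : MemHe s V ε u)
    (hdual : ∀ φ : E3 → ℝ, MemHe s V ε φ → normSqE s V ε φ ≤ 1 →
      |JeDeriv s M V Ω f V₀ K a ε u φ| ≤ η) :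
    |JeDeriv s M V Ω f V₀ K a ε u u| ≤ η * √(normSqE s V ε u) := by
  set D := JeDeriv s M V Ω f V₀ K a ε u u
  have hscaled : ∀ c : ℝ, c ^ 2 * normSqE s V ε u ≤ 1 → c * |D| ≤ η := by
    intro c hc
    have h := hdual _ (hu.const_mul c) (by rwa [normSqE_const_mul])
    rw [JeDeriv_const_mul_right, abs_mul] at h
    exact (mul_le_mul_of_nonneg_right (le_abs_self c) (abs_nonneg D)).trans h
  rcases (normSqE_nonneg hV u (s := s) (ε := ε)).eq_or_lt with ht | ht
  · rw [← ht, Real.sqrt_zero, mul_zero]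
    by_contra! hD
    have h := hscaled ((η + 1) / |D|) (by simp [← ht])
    rw [div_mul_cancel₀ _ hD.ne'] at h
    linarith
  · have h := hscaled (√(normSqE s V ε u))⁻¹
      (by rw [inv_pow, Real.sq_sqrt ht.le, inv_mul_cancel₀ ht.ne'])
    rwa [inv_mul_le_iff₀ (Real.sqrt_pos.2 ht), mul_comm] at h

lemma mul_integral_Gpen_le (hfcont : Continuous f) (hfneg : ∀ t ≤ (0:ℝ), f t = 0)
    (hf3 : ∀ t : ℝ, 0 < t → 0 < ϑ * Fprim f t ∧ ϑ * Fprim f t ≤ f t * t)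
    (hfa : f a = V₀ / K * a) (ha : 0 ≤ a) (hV₀ : 0 ≤ V₀) (hK : 0 ≤ K) (hϑ : 2 ≤ ϑ)
    (hV : ∀ x, V₀ ≤ V x)
    (hgu : Integrable (fun x => gpen Ω f V₀ K a (ε • x) (u x) * u x))
    (hVu : Integrable (fun x => V (ε • x) * u x ^ 2)) :
    ϑ * ∫ x, Gpen Ω f V₀ K a (ε • x) (u x)
      ≤ (∫ x, gpen Ω f V₀ K a (ε • x) (u x) * u x)
        + (ϑ - 2) / 2 * (1 / K) * ∫ x, V (ε • x) * u x ^ 2 := by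
  have hVK : 0 ≤ V₀ / K := div_nonneg hV₀ hK
  have hpen : ∀ x, V₀ / K * u x ^ 2 ≤ 1 / K * (V (ε • x) * u x ^ 2) := fun x => by
    rw [div_eq_mul_one_div, mul_comm V₀, mul_assoc]
    gcongr
    exact hV _
  calc ϑ * ∫ x, Gpen Ω f V₀ K a (ε • x) (u x)
      = ∫ x, ϑ * Gpen Ω f V₀ K a (ε • x) (u x) := (integral_const_mul _ _).symm
    _ ≤ ∫ x, (gpen Ω f V₀ K a (ε • x) (u x) * u x
          + (ϑ - 2) / 2 * (1 / K) * (V (ε • x) * u x ^ 2)) := by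
        refine integral_mono_of_nonneg (.of_forall fun x => mul_nonneg (by linarith)
          (Gpen_nonneg hfcont hfneg hf3 hfa ha hVK _ _)) (hgu.add (hVu.const_mul _))
          (.of_forall fun x => ?_)
        have := mul_le_mul_of_nonneg_left (hpen x) (by linarith : (0:ℝ) ≤ (ϑ - 2) / 2)
        linarith [mul_Gpen_le (Ω := Ω) hfcont hfneg hf3 hfa ha hVK hϑ (ε • x) (u x)]
    _ = _ := by rw [integral_add hgu (hVu.const_mul _), integral_const_mul]

lemma le_mul_Je_sub_JeDeriv (hMcont : Continuous M) (hM1 : ∀ t : ℝ, 0 ≤ t → m₀ ≤ M t)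
    (hM3 : ∀ t₁ t₂ : ℝ, 0 < t₂ → t₂ ≤ t₁ →
      M t₁ / t₁ - M t₂ / t₂ ≤ m₀ * (1 / t₁ - 1 / t₂))
    (hfcont : Continuous f) (hfneg : ∀ t ≤ (0:ℝ), f t = 0)
    (hf3 : ∀ t : ℝ, 0 < t → 0 < ϑ * Fprim f t ∧ ϑ * Fprim f t ≤ f t * t)
    (hfa : f a = V₀ / K * a) (ha : 0 ≤ a) (hV₀ : 0 ≤ V₀) (hK : 0 ≤ K) (hϑ : 4 ≤ ϑ)
    (hV : ∀ x, V₀ ≤ V x) (hu : MemHe s V ε u)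
    (hgu : Integrable (fun x => gpen Ω f V₀ K a (ε • x) (u x) * u x)) :
    (ϑ - 2) / 2 * (m₀ - 1 / K) * normSqE s V ε u
      ≤ ϑ * Je s M V Ω f V₀ K a ε u - JeDeriv s M V Ω f V₀ K a ε u u := by
  set t := normSqE s V ε u
  have ht : 0 ≤ t := normSqE_nonneg (fun x => hV₀.trans (hV x)) u
  have hKirchhoff := le_mul_Mhat_sub_mul hMcont hM1 hM3 hϑ ht
  have hG := mul_integral_Gpen_le hfcont hfneg hf3 hfa ha hV₀ hK (by linarith) hV hgu hu.2
  have hVt : (ϑ - 2) / 2 * (1 / K) * ∫ x, V (ε • x) * u x ^ 2 ≤ (ϑ - 2) / 2 * (1 / K) * t := by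
    have : 0 ≤ ϑ - 2 := by linarith
    gcongr
    exact integral_mul_sq_le_normSqE u
  have hJ : Je s M V Ω f V₀ K a ε u = 1 / 2 * Mhat M t - ∫ x, Gpen Ω f V₀ K a (ε • x) (u x) := rfl
  have hD : JeDeriv s M V Ω f V₀ K a ε u u
      = M t * t - ∫ x, gpen Ω f V₀ K a (ε • x) (u x) * u x := rfl
  rw [hJ, hD]
  linear_combination hKirchhoff + hG + hVt

/-- The second case is an artefact of the convention `∫ = 0` for non-integrable functions:
then `⟨J_ε'(u), u⟩ = M(‖u‖²) ‖u‖² ≥ m₀ ‖u‖²`. -/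
lemma mul_normSqE_le_max_Je_add_abs_JeDeriv (hm₀ : 0 ≤ m₀) (hMcont : Continuous M)
    (hM1 : ∀ t : ℝ, 0 ≤ t → m₀ ≤ M t)
    (hM3 : ∀ t₁ t₂ : ℝ, 0 < t₂ → t₂ ≤ t₁ →
      M t₁ / t₁ - M t₂ / t₂ ≤ m₀ * (1 / t₁ - 1 / t₂))
    (hfcont : Continuous f) (hfneg : ∀ t ≤ (0:ℝ), f t = 0)
    (hf3 : ∀ t : ℝ, 0 < t → 0 < ϑ * Fprim f t ∧ ϑ * Fprim f t ≤ f t * t)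
    (hfa : f a = V₀ / K * a) (ha : 0 ≤ a) (hV₀ : 0 ≤ V₀) (hK : 0 ≤ K) (hϑ : 4 ≤ ϑ)
    (hV : ∀ x, V₀ ≤ V x) (hu : MemHe s V ε u) :
    (ϑ - 2) / (2 * ϑ) * (m₀ - 1 / K) * normSqE s V ε u
      ≤ max (Je s M V Ω f V₀ K a ε u) 0 + |JeDeriv s M V Ω f V₀ K a ε u u| := by
  set t := normSqE s V ε u
  set J := Je s M V Ω f V₀ K a ε u
  set D := JeDeriv s M V Ω f V₀ K a ε u u
  have hϑ₀ : 0 < ϑ := by linarith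
  have ht : 0 ≤ t := normSqE_nonneg (fun x => hV₀.trans (hV x)) u
  by_cases hgu : Integrable (fun x => gpen Ω f V₀ K a (ε • x) (u x) * u x)
  · have h := le_mul_Je_sub_JeDeriv hMcont hM1 hM3 hfcont hfneg hf3 hfa ha hV₀ hK hϑ hV hu hgu
    have hdiv : (ϑ - 2) / (2 * ϑ) * (m₀ - 1 / K) * t = (ϑ - 2) / 2 * (m₀ - 1 / K) * t / ϑ := by
      field_simp
    rw [hdiv, div_le_iff₀ hϑ₀]
    nlinarith [le_max_left J 0, neg_le_abs D, abs_nonneg D]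
  · have hD : D = M t * t := by
      simp only [D, JeDeriv, integral_undef hgu, sub_zero]
      rfl
    have hα : 0 ≤ (ϑ - 2) / (2 * ϑ) := div_nonneg (by linarith) (by linarith)
    have hα₁ : (ϑ - 2) / (2 * ϑ) ≤ 1 := (div_le_one (by linarith)).2 (by linarith)
    have hc : (ϑ - 2) / (2 * ϑ) * (m₀ - 1 / K) ≤ m₀ :=
      calc (ϑ - 2) / (2 * ϑ) * (m₀ - 1 / K) ≤ (ϑ - 2) / (2 * ϑ) * m₀ := by
            gcongr
            linarith [one_div_nonneg.2 hK]
        _ ≤ m₀ := mul_le_of_le_one_left hm₀ hα₁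
    have hMt : m₀ * t ≤ M t * t := mul_le_mul_of_nonneg_right (hM1 t ht) ht
    nlinarith [le_max_right J 0, le_abs_self D]

end Functional

theorem PS_sequences_bounded_general
    (s : ℝ)
    (M : ℝ → ℝ) (m₀ : ℝ) (hm₀ : 0 < m₀) (hMcont : Continuous M)
    (hM1 : ∀ t : ℝ, 0 ≤ t → m₀ ≤ M t)
    (hM3 : ∀ t₁ t₂ : ℝ, 0 < t₂ → t₂ ≤ t₁ →
      M t₁ / t₁ - M t₂ / t₂ ≤ m₀ * (1 / t₁ - 1 / t₂))
    (V : E3 → ℝ) (V₀ : ℝ) (hV₀ : 0 < V₀)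
    (hVinf : IsGLB (Set.range V) V₀)
    (Ω : Set E3)
    (f : ℝ → ℝ) (hfcont : Continuous f) (hfneg : ∀ t ≤ (0:ℝ), f t = 0)
    (ϑ : ℝ) (hϑ : 4 < ϑ ∧ ϑ < 6 / (3 - 2 * s))
    (hf3 : ∀ t : ℝ, 0 < t → 0 < ϑ * Fprim f t ∧ ϑ * Fprim f t ≤ f t * t)
    (K a : ℝ) (hK : 2 / m₀ < K) (ha : 0 < a) (hfa : f a = V₀ / K * a) :
    ∀ ε > (0:ℝ), ∀ d : ℝ, ∀ u : ℕ → E3 → ℝ,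
      PSSeqE s M V Ω f V₀ K a ε d u →
      (∃ B : ℝ, ∀ n, normSqE s V ε (u n) ≤ B) ∧
      ∃ C : ℝ, ∀ n,
        (ϑ - 2) / (2 * ϑ) * (m₀ - 1 / K) * normSqE s V ε (u n)
          ≤ C + Real.sqrt (normSqE s V ε (u n)) := by
  intro ε _ d u ⟨hmem, hJ, hJ'⟩
  have hK₀ : 0 < K := (div_pos two_pos hm₀).trans hK
  have hV : ∀ x, V₀ ≤ V x := fun x => hVinf.1 ⟨x, rfl⟩
  have hV' : ∀ x, 0 ≤ V x := fun x => hV₀.le.trans (hV x)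
  have hc : 0 < (ϑ - 2) / (2 * ϑ) * (m₀ - 1 / K) := by
    have : 1 / K < m₀ / 2 := by
      rw [div_lt_iff₀ hK₀, div_mul_eq_mul_div, lt_div_iff₀ two_pos]
      linarith [(div_lt_iff₀ hm₀).1 hK]
    exact mul_pos (div_pos (by linarith) (by linarith)) (by linarith)
  obtain ⟨N, hN⟩ := hJ' 1 one_pos
  have hbound : ∀ᶠ n in atTop, (ϑ - 2) / (2 * ϑ) * (m₀ - 1 / K) * normSqE s V ε (u n)
      ≤ max (d + 1) 0 + √(normSqE s V ε (u n)) := by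
    filter_upwards [hJ.eventually_le_const (lt_add_one d), eventually_ge_atTop N] with n hJn hn
    calc _ ≤ max (Je s M V Ω f V₀ K a ε (u n)) 0 + |JeDeriv s M V Ω f V₀ K a ε (u n) (u n)| :=
          mul_normSqE_le_max_Je_add_abs_JeDeriv hm₀.le hMcont hM1 hM3 hfcont hfneg hf3 hfa
            ha.le hV₀.le hK₀.le hϑ.1.le hV (hmem n)
      _ ≤ _ := add_le_add (max_le_max_right 0 hJn)
          (by simpa using abs_JeDeriv_self_le hV' (hmem n) (hN n hn))
  obtain ⟨C, hC⟩ := exists_forall_le_add_of_eventually_le hbound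
  exact ⟨⟨_, fun n => le_of_mul_le_add_sqrt hc (normSqE_nonneg hV' _) (hC n)⟩, C, hC⟩

/-- Lemma 3.4: `(PS)_d` sequences for `J_ε` are bounded in `H_ε`,
with the explicit estimate `(ϑ-2)/(2ϑ) (m₀ - 1/K) ‖u_n‖_ε² ≤ C + ‖u_n‖_ε`. -/
theorem PS_sequences_bounded
    (s : ℝ) (hs : 3 / 4 < s ∧ s < 1)
    (M : ℝ → ℝ) (m₀ : ℝ) (hm₀ : 0 < m₀) (hMcont : Continuous M)
    (hM1 : ∀ t : ℝ, 0 ≤ t → m₀ ≤ M t) (hM2 : MonotoneOn M (Ici (0:ℝ)))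
    (hM3 : ∀ t₁ t₂ : ℝ, 0 < t₂ → t₂ ≤ t₁ →
      M t₁ / t₁ - M t₂ / t₂ ≤ m₀ * (1 / t₁ - 1 / t₂))
    (V : E3 → ℝ) (hVcont : Continuous V) (V₀ : ℝ) (hV₀ : 0 < V₀)
    (hVinf : IsGLB (Set.range V) V₀)
    (Ω : Set E3) (hΩopen : IsOpen Ω) (hΩbd : Bornology.IsBounded Ω)
    (hΩV : ∀ x ∈ frontier Ω, V₀ < V x)
    (hΛne : {x ∈ Ω | V x = V₀}.Nonempty)
    (f : ℝ → ℝ) (hfcont : Continuous f) (hfneg : ∀ t ≤ (0:ℝ), f t = 0)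
    (hf1 : Tendsto (fun t => f t / t ^ 3) (𝓝[>] (0:ℝ)) (𝓝 0))
    (q : ℝ) (hq : 4 < q ∧ q < 6 / (3 - 2 * s))
    (hf2 : Tendsto (fun t => f t / t ^ (q - 1)) atTop (𝓝 0))
    (ϑ : ℝ) (hϑ : 4 < ϑ ∧ ϑ < 6 / (3 - 2 * s))
    (hf3 : ∀ t : ℝ, 0 < t → 0 < ϑ * Fprim f t ∧ ϑ * Fprim f t ≤ f t * t)
    (hf4 : ∀ t₁ t₂ : ℝ, 0 < t₁ → t₁ ≤ t₂ → f t₁ / t₁ ^ 3 ≤ f t₂ / t₂ ^ 3)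
    (K a : ℝ) (hK : 2 / m₀ < K) (ha : 0 < a) (hfa : f a = V₀ / K * a) :
    ∀ ε > (0:ℝ), ∀ d : ℝ, ∀ u : ℕ → E3 → ℝ,
      PSSeqE s M V Ω f V₀ K a ε d u →
      (∃ B : ℝ, ∀ n, normSqE s V ε (u n) ≤ B) ∧
      ∃ C : ℝ, ∀ n,
        (ϑ - 2) / (2 * ϑ) * (m₀ - 1 / K) * normSqE s V ε (u n)
          ≤ C + Real.sqrt (normSqE s V ε (u n)) :=
  PS_sequences_bounded_general s M m₀ hm₀ hMcont hM1 hM3 V V₀ hV₀ hVinf Ω f hfcont hfneg ϑ hϑ hf3 K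
    a hK ha hfa
end
end

section
/- The barycenter map satisfies lim_{ε→0} β_ε(Φ_ε(y)) = y uniformly in y ∈ Λ. -/
noncomputable section

open MeasureTheory Filter Topology Set Metric
open scoped Classical

set_option maxHeartbeats 2000000 in
/-- Lemma 5.3: the barycenter map satisfies
`β_ε(Φ_ε(y)) → y` as `ε → 0`, uniformly in `y ∈ Λ`. -/
theorem barycenter_of_projected_peaks
    (s : ℝ) (hs : 3 / 4 < s ∧ s < 1)
    (M : ℝ → ℝ) (m₀ : ℝ) (hm₀ : 0 < m₀) (hMcont : Continuous M)
    (hM1 : ∀ t : ℝ, 0 ≤ t → m₀ ≤ M t) (hM2 : MonotoneOn M (Ici (0:ℝ)))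
    (hM3 : ∀ t₁ t₂ : ℝ, 0 < t₂ → t₂ ≤ t₁ →
      M t₁ / t₁ - M t₂ / t₂ ≤ m₀ * (1 / t₁ - 1 / t₂))
    (V : E3 → ℝ) (hVcont : Continuous V) (V₀ : ℝ) (hV₀ : 0 < V₀)
    (hVinf : IsGLB (Set.range V) V₀)
    (Ω : Set E3) (hΩopen : IsOpen Ω) (hΩbd : Bornology.IsBounded Ω)
    (hΩV : ∀ x ∈ frontier Ω, V₀ < V x)
    (hΛne : {x ∈ Ω | V x = V₀}.Nonempty)
    (f : ℝ → ℝ) (hfcont : Continuous f) (hfneg : ∀ t ≤ (0:ℝ), f t = 0)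
    (hf1 : Tendsto (fun t => f t / t ^ 3) (𝓝[>] (0:ℝ)) (𝓝 0))
    (q : ℝ) (hq : 4 < q ∧ q < 6 / (3 - 2 * s))
    (hf2 : Tendsto (fun t => f t / t ^ (q - 1)) atTop (𝓝 0))
    (ϑ : ℝ) (hϑ : 4 < ϑ ∧ ϑ < 6 / (3 - 2 * s))
    (hf3 : ∀ t : ℝ, 0 < t → 0 < ϑ * Fprim f t ∧ ϑ * Fprim f t ≤ f t * t)
    (hf4 : ∀ t₁ t₂ : ℝ, 0 < t₁ → t₁ ≤ t₂ → f t₁ / t₁ ^ 3 ≤ f t₂ / t₂ ^ 3)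
    (K a : ℝ) (hK : 2 / m₀ < K) (ha : 0 < a) (hfa : f a = V₀ / K * a)
    (Λ Λδ : Set E3) (hΛdef : Λ = {x ∈ Ω | V x = V₀})
    (δ : ℝ) (hδ : 0 < δ) (hΛδdef : Λδ = {x : E3 | Metric.infDist x Λ ≤ δ})
    (hΛδΩ : Λδ ⊆ Ω)
    (η : ℝ → ℝ) (hηsm : ContDiff ℝ (⊤ : ℕ∞) η) (hηsupp : HasCompactSupport η)
    (hη01 : ∀ t, η t ∈ Icc (0:ℝ) 1)
    (hη1 : ∀ t ∈ Icc (0:ℝ) (δ / 2), η t = 1) (hη0 : ∀ t : ℝ, δ ≤ t → η t = 0)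
    (w : E3 → ℝ) (hw : MemHs s w) (hwpos : ∀ x, 0 < w x)
    (hwsol : ∀ φ : E3 → ℝ, MemHs s φ →
      M (normSqO s V₀ w) * innerO s V₀ w φ = ∫ x : E3, f (w x) * φ x)
    (hwgs : J0 s M V₀ f w = c0lvl s M V₀ f)
    (T : ℝ → E3 → ℝ)
    (hT : ∀ ε > (0:ℝ), ∀ y ∈ Λ, 0 < T ε y ∧
      ∀ t : ℝ, 0 ≤ t →
        Je s M V Ω f V₀ K a ε (fun x => t * PsiFn η w ε y x)
          ≤ Je s M V Ω f V₀ K a ε (fun x => T ε y * PsiFn η w ε y x))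
    (ρ : ℝ) (hρ : 0 < ρ) (hΛδρ : Λδ ⊆ Metric.ball (0:E3) ρ) :
    ∀ ζ > (0:ℝ), ∃ εbar > (0:ℝ), ∀ ε : ℝ, 0 < ε → ε < εbar → ∀ y ∈ Λ,
      ‖bary ρ ε (fun x => T ε y * PsiFn η w ε y x) - y‖ < ζ := by

  -- Preliminaries about `w`
  have hwInt : Integrable (fun z : E3 => w z ^ 2) volume := hw.1.integrable_sq
  have hwm : AEStronglyMeasurable w volume := hw.1.aestronglyMeasurable
  set c : ℝ := ∫ z : E3, w z ^ 2 with hcdef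
  have hc : (0:ℝ) < c := by
    rw [hcdef]
    refine (integral_pos_iff_support_of_nonneg (fun z => sq_nonneg _) hwInt).2 ?_
    have hsupp : Function.support (fun z : E3 => w z ^ 2) = univ := by
      ext z
      simp [Function.mem_support, pow_eq_zero_iff, (hwpos z).ne']
    rw [hsupp]
    exact lt_of_lt_of_le (measure_ball_pos _ (0:E3) one_pos) (measure_mono (subset_univ _))
  -- the tail of the integral of `w^2` tends to zero
  have htail : Tendsto (fun n : ℕ => ∫ z in (closedBall (0:E3) (n:ℝ))ᶜ, w z ^ 2) atTop (𝓝 0) := by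
    have hB : Tendsto (fun n : ℕ => ∫ z in closedBall (0:E3) (n:ℝ), w z ^ 2) atTop (𝓝 c) := by
      have hconv := tendsto_integral_of_dominated_convergence
        (F := fun n : ℕ => (closedBall (0:E3) (n:ℝ)).indicator (fun z => w z ^ 2))
        (f := fun z : E3 => w z ^ 2) (bound := fun z => w z ^ 2)
        (fun n => hwInt.aestronglyMeasurable.indicator measurableSet_closedBall)
        hwInt
        (fun n => ae_of_all _ fun z => by
          by_cases hz : z ∈ closedBall (0:E3) (n:ℝ)
          · simp [Set.indicator_of_mem hz, Real.norm_eq_abs, abs_of_nonneg (sq_nonneg (w z))]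
          · simp [Set.indicator_of_notMem hz, sq_nonneg (w z)])
        (ae_of_all _ fun z => by
          have hev : ∀ᶠ n : ℕ in atTop,
              (closedBall (0:E3) (n:ℝ)).indicator (fun z => w z ^ 2) z = w z ^ 2 := by
            filter_upwards [eventually_ge_atTop ⌈‖z‖⌉₊] with n hn
            have : z ∈ closedBall (0:E3) (n:ℝ) := by
              rw [mem_closedBall_zero_iff]
              exact le_trans (Nat.le_ceil _) (by exact_mod_cast hn)
            rw [Set.indicator_of_mem this]
          exact Tendsto.congr' (Filter.EventuallyEq.symm hev) tendsto_const_nhds)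
      have heq : (fun n : ℕ => ∫ z, (closedBall (0:E3) (n:ℝ)).indicator (fun z => w z ^ 2) z)
          = fun n : ℕ => ∫ z in closedBall (0:E3) (n:ℝ), w z ^ 2 := by
        funext n
        exact integral_indicator measurableSet_closedBall
      rw [heq] at hconv
      exact hconv
    have heq : (fun n : ℕ => ∫ z in (closedBall (0:E3) (n:ℝ))ᶜ, w z ^ 2)
        = fun n : ℕ => c - ∫ z in closedBall (0:E3) (n:ℝ), w z ^ 2 := by
      funext n
      have hadd := integral_add_compl (measurableSet_closedBall
        (x := (0:E3)) (ε := (n:ℝ))) hwInt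
      rw [hcdef]
      linarith
    rw [heq]
    simpa using (hB.const_sub c)
  intro ζ hζ
  have hmin : (0:ℝ) < min (c/2) (c*ζ/(8*δ)) := by positivity
  obtain ⟨R, hRτ, hR1⟩ :=
    ((htail.eventually (gt_mem_nhds hmin)).and (eventually_ge_atTop 1)).exists
  set τ : ℝ := ∫ z in (closedBall (0:E3) (R:ℝ))ᶜ, w z ^ 2 with hτdef
  have hτc2 : τ < c/2 := lt_of_lt_of_le hRτ (min_le_left _ _)
  have hτζ : τ < c*ζ/(8*δ) := lt_of_lt_of_le hRτ (min_le_right _ _)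
  have hτ0 : (0:ℝ) ≤ τ :=
    setIntegral_nonneg measurableSet_closedBall.compl (fun z _ => sq_nonneg _)
  have hBR : ∫ z in closedBall (0:E3) (R:ℝ), w z ^ 2 = c - τ := by
    have hadd := integral_add_compl (measurableSet_closedBall
      (x := (0:E3)) (ε := (R:ℝ))) hwInt
    rw [hτdef, hcdef]
    linarith
  have hRpos : (0:ℝ) < (R:ℝ) := by exact_mod_cast Nat.lt_of_lt_of_le Nat.zero_lt_one hR1
  refine ⟨min (δ/(2*R)) (ζ/(4*R)), by positivity, ?_⟩
  intro ε hε hεlt y hy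
  have hεδ : ε * R ≤ δ/2 := by
    have h1 : ε < δ/(2*R) := lt_of_lt_of_le hεlt (min_le_left _ _)
    rw [lt_div_iff₀ (by positivity)] at h1
    have h2 : ε * (2*R) = 2*(ε*R) := by ring
    linarith
  have hεζ : ε * R < ζ/4 := by
    have h1 : ε < ζ/(4*R) := lt_of_lt_of_le hεlt (min_le_right _ _)
    rw [lt_div_iff₀ (by positivity)] at h1
    have h2 : ε * (4*R) = 4*(ε*R) := by ring
    linarith
  obtain ⟨ht, -⟩ := hT ε hε y hy
  set t : ℝ := T ε y with htdef
  set g : E3 → ℝ := fun z => (η ‖ε • z‖ * w z)^2 with hgdef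
  have hg0 : ∀ z, 0 ≤ g z := fun z => sq_nonneg _
  have hgw : ∀ z, g z ≤ w z ^ 2 := by
    intro z
    have h1 := (hη01 ‖ε • z‖).1
    have h2 := (hη01 ‖ε • z‖).2
    rw [hgdef]
    simp only [mul_pow]
    exact mul_le_of_le_one_left (sq_nonneg (w z)) (pow_le_one₀ h1 h2)
  have hgm : AEStronglyMeasurable g volume := by
    have hc1 : Continuous fun z : E3 => η ‖ε • z‖ :=
      hηsm.continuous.comp (continuous_norm.comp (continuous_const_smul ε))
    have hmm := hc1.aestronglyMeasurable.mul hwm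
    refine (hmm.mul hmm).congr (ae_of_all _ fun z => ?_)
    simp only [hgdef, Pi.mul_apply]
    ring
  have hgInt : Integrable g := hwInt.mono' hgm (ae_of_all _ fun z => by
    rw [Real.norm_eq_abs, abs_of_nonneg (hg0 z)]; exact hgw z)
  have hupsMeas : Measurable (UpsilonMap ρ) := by
    unfold UpsilonMap
    refine Measurable.ite (measurableSet_lt measurable_norm measurable_const)
      measurable_id ?_
    exact (measurable_const.div measurable_norm).smul measurable_id
  have hupsm : AEStronglyMeasurable (fun z : E3 => UpsilonMap ρ (ε • z + y)) volume := by
    refine (hupsMeas.comp ?_).aestronglyMeasurable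
    exact (measurable_id.const_smul ε).add_const y
  have hupsle : ∀ x : E3, ‖UpsilonMap ρ x‖ ≤ ρ := by
    intro x
    rw [UpsilonMap]
    split_ifs with h
    · exact h.le
    · rcases eq_or_ne x 0 with rfl | hx
      · simpa using hρ.le
      · have hxn : (0:ℝ) < ‖x‖ := norm_pos_iff.2 hx
        push_neg at h
        rw [norm_smul, Real.norm_eq_abs, abs_of_nonneg (div_nonneg hρ.le hxn.le),
          div_mul_cancel₀ _ hxn.ne']
  have hkey : ∀ z : E3, η ‖ε • z‖ ≠ 0 →
      UpsilonMap ρ (ε • z + y) = ε • z + y ∧ ‖ε • z‖ < δ := by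
    intro z hz
    have hlt : ‖ε • z‖ < δ := by
      by_contra h
      push_neg at h
      exact hz (hη0 _ h)
    have hmem : ε • z + y ∈ Λδ := by
      rw [hΛδdef]
      have h1 : infDist (ε • z + y) Λ ≤ dist (ε • z + y) y := infDist_le_dist_of_mem hy
      have h2 : dist (ε • z + y) y = ‖ε • z‖ := by
        rw [dist_eq_norm]
        simp
      simp only [Set.mem_setOf_eq]
      linarith
    have hball := hΛδρ hmem
    exact ⟨by rw [UpsilonMap, if_pos (mem_ball_zero_iff.mp hball)], hlt⟩
  set den : ℝ := ∫ z : E3, g z with hdendef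
  have hnormsmul : ∀ z : E3, ‖ε • z‖ = ε * ‖z‖ := fun z => by
    rw [norm_smul, Real.norm_eq_abs, abs_of_pos hε]
  have hdenBR : c - τ ≤ den := by
    have heq : ∫ z in closedBall (0:E3) (R:ℝ), g z
        = ∫ z in closedBall (0:E3) (R:ℝ), w z ^ 2 := by
      refine setIntegral_congr_fun measurableSet_closedBall ?_
      intro z hz
      have hz' : ‖z‖ ≤ (R:ℝ) := mem_closedBall_zero_iff.mp hz
      have hle : ‖ε • z‖ ≤ δ/2 := by
        rw [hnormsmul z]
        have : ε * ‖z‖ ≤ ε * R := mul_le_mul_of_nonneg_left hz' hε.le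
        linarith
      rw [hgdef]
      simp only
      rw [hη1 _ ⟨norm_nonneg _, hle⟩, one_mul]
    have hle2 : ∫ z in closedBall (0:E3) (R:ℝ), g z ≤ den :=
      setIntegral_le_integral hgInt (ae_of_all _ hg0)
    rw [heq, hBR] at hle2
    exact hle2
  have hden2 : c/2 ≤ den := by linarith
  have hdenpos : (0:ℝ) < den := by linarith
  -- translation identities
  have hε' : ε ≠ 0 := hε.ne'
  have hpt : ∀ z : E3, PsiFn η w ε y (z + ε⁻¹ • y) = η ‖ε • z‖ * w z := by
    intro z
    have h1 : ε • (z + ε⁻¹ • y) - y = ε • z := by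
      rw [smul_add, smul_inv_smul₀ hε']
      abel
    simp only [PsiFn, h1, inv_smul_smul₀ hε']
  have hpt2 : ∀ z : E3, ε • (z + ε⁻¹ • y) = ε • z + y := by
    intro z
    rw [smul_add, smul_inv_smul₀ hε']
  have htrans1 : ∫ x : E3, (PsiFn η w ε y x)^2 = den := by
    calc ∫ x : E3, (PsiFn η w ε y x)^2
        = ∫ z : E3, (PsiFn η w ε y (z + ε⁻¹ • y))^2 :=
          (integral_add_right_eq_self (fun x : E3 => (PsiFn η w ε y x)^2) (ε⁻¹ • y)).symm
      _ = ∫ z : E3, g z := by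
          congr 1
          funext z
          rw [hpt z, hgdef]
      _ = den := hdendef.symm
  set I : E3 := ∫ z : E3, g z • UpsilonMap ρ (ε • z + y) with hIdef
  have htrans2 : ∫ x : E3, (PsiFn η w ε y x)^2 • UpsilonMap ρ (ε • x) = I := by
    calc ∫ x : E3, (PsiFn η w ε y x)^2 • UpsilonMap ρ (ε • x)
        = ∫ z : E3, (PsiFn η w ε y (z + ε⁻¹ • y))^2 • UpsilonMap ρ (ε • (z + ε⁻¹ • y)) :=
          (integral_add_right_eq_self
            (fun x : E3 => (PsiFn η w ε y x)^2 • UpsilonMap ρ (ε • x)) (ε⁻¹ • y)).symm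
      _ = ∫ z : E3, g z • UpsilonMap ρ (ε • z + y) := by
          congr 1
          funext z
          rw [hpt z, hpt2 z, hgdef]
      _ = I := hIdef.symm
  have ht2 : (t:ℝ)^2 ≠ 0 := pow_ne_zero _ ht.ne'
  have hbary : bary ρ ε (fun x => t * PsiFn η w ε y x) = den⁻¹ • I := by
    rw [bary]
    have h1 : ∫ x : E3, (t * PsiFn η w ε y x)^2 = t^2 * den := by
      simp only [mul_pow]
      rw [integral_const_mul, htrans1]
    have h2 : ∫ x : E3, (t * PsiFn η w ε y x)^2 • UpsilonMap ρ (ε • x) = t^2 • I := by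
      simp only [mul_pow, mul_smul]
      rw [integral_smul, htrans2]
    rw [h1, h2, smul_smul]
    congr 1
    field_simp
  -- split off the constant part of the barycenter integral
  set G : E3 → E3 := fun z => g z • (UpsilonMap ρ (ε • z + y) - y) with hGdef
  have hGm : AEStronglyMeasurable G volume :=
    hgm.smul (hupsm.sub aestronglyMeasurable_const)
  have hGle : ∀ z, ‖G z‖ ≤ (ρ + ‖y‖) * w z ^ 2 := by
    intro z
    rw [hGdef]
    simp only
    rw [norm_smul, Real.norm_eq_abs, abs_of_nonneg (hg0 z)]
    have h1 := norm_sub_le (UpsilonMap ρ (ε • z + y)) y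
    have h2 := hupsle (ε • z + y)
    calc g z * ‖UpsilonMap ρ (ε • z + y) - y‖
        ≤ w z ^ 2 * (ρ + ‖y‖) :=
          mul_le_mul (hgw z) (by linarith) (norm_nonneg _) (sq_nonneg _)
      _ = (ρ + ‖y‖) * w z ^ 2 := mul_comm _ _
  have hGInt : Integrable G :=
    (hwInt.const_mul (ρ + ‖y‖)).mono' hGm
      (ae_of_all _ fun z => hGle z)
  have hgyInt : Integrable (fun z => g z • y) := hgInt.smul_const y
  have hIsplit : I = (∫ z : E3, G z) + den • y := by
    rw [hIdef]
    have hptG : ∀ z : E3, g z • UpsilonMap ρ (ε • z + y) = G z + g z • y := by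
      intro z
      rw [hGdef]
      simp only [smul_sub]
      abel
    calc ∫ z : E3, g z • UpsilonMap ρ (ε • z + y)
        = ∫ z : E3, (G z + g z • y) := by
          congr 1
          funext z
          exact hptG z
      _ = (∫ z : E3, G z) + ∫ z : E3, g z • y := integral_add hGInt hgyInt
      _ = (∫ z : E3, G z) + den • y := by rw [integral_smul_const]
  -- the key estimate
  have hnormI : ‖∫ z : E3, G z‖ ≤ ε * R * c + δ * τ := by
    set B : Set E3 := closedBall (0:E3) (R:ℝ) with hBdef
    set bnd : E3 → ℝ := fun z =>
      B.indicator (fun z => ε * R * w z ^ 2) z + Bᶜ.indicator (fun z => δ * w z ^ 2) z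
      with hbnddef
    have hbndInt : Integrable bnd :=
      ((hwInt.const_mul (ε*R)).indicator measurableSet_closedBall).add
        ((hwInt.const_mul δ).indicator measurableSet_closedBall.compl)
    have hptb : ∀ z, ‖G z‖ ≤ bnd z := by
      intro z
      have hGnorm1 : η ‖ε • z‖ ≠ 0 → ‖G z‖ = g z * (ε * ‖z‖) := by
        intro hz
        obtain ⟨hU, -⟩ := hkey z hz
        rw [hGdef]
        simp only [hU, add_sub_cancel_right]
        rw [norm_smul, Real.norm_eq_abs, abs_of_nonneg (hg0 z), hnormsmul z]
      have hGnorm0 : η ‖ε • z‖ = 0 → ‖G z‖ = 0 := by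
        intro hz
        rw [hGdef]
        simp only [hgdef, hz, zero_mul, ne_eq, OfNat.ofNat_ne_zero,
          not_false_eq_true, zero_pow, zero_smul, norm_zero]
      by_cases hzB : z ∈ B
      · have hbz : bnd z = ε * R * w z ^ 2 := by
          rw [hbnddef]
          simp [Set.indicator_of_mem hzB,
            Set.indicator_of_notMem (show z ∉ Bᶜ from fun h => h hzB)]
        rw [hbz]
        by_cases hz : η ‖ε • z‖ = 0
        · rw [hGnorm0 hz]
          positivity
        · rw [hGnorm1 hz]
          have hz' : ‖z‖ ≤ (R:ℝ) := mem_closedBall_zero_iff.mp hzB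
          have hmm : g z * (ε * ‖z‖) ≤ w z ^ 2 * (ε * R) :=
            mul_le_mul (hgw z) (mul_le_mul_of_nonneg_left hz' hε.le)
              (mul_nonneg hε.le (norm_nonneg z)) (sq_nonneg (w z))
          have hrg : w z ^ 2 * (ε * R) = ε * R * w z ^ 2 := by ring
          linarith
      · have hbz : bnd z = δ * w z ^ 2 := by
          rw [hbnddef]
          simp [Set.indicator_of_notMem hzB, Set.indicator_of_mem (mem_compl hzB)]
        rw [hbz]
        by_cases hz : η ‖ε • z‖ = 0
        · rw [hGnorm0 hz]
          positivity
        · rw [hGnorm1 hz]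
          obtain ⟨-, hδlt⟩ := hkey z hz
          rw [hnormsmul z] at hδlt
          have hmm : g z * (ε * ‖z‖) ≤ w z ^ 2 * δ :=
            mul_le_mul (hgw z) hδlt.le
              (mul_nonneg hε.le (norm_nonneg z)) (sq_nonneg (w z))
          have hrg : w z ^ 2 * δ = δ * w z ^ 2 := by ring
          linarith
    calc ‖∫ z : E3, G z‖
        ≤ ∫ z : E3, ‖G z‖ := norm_integral_le_integral_norm _
      _ ≤ ∫ z : E3, bnd z :=
          integral_mono_of_nonneg (ae_of_all _ fun z => norm_nonneg _) hbndInt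
            (ae_of_all _ hptb)
      _ = ε * R * (c - τ) + δ * τ := by
          rw [hbnddef]
          rw [integral_add ((hwInt.const_mul (ε*R)).indicator measurableSet_closedBall)
            ((hwInt.const_mul δ).indicator measurableSet_closedBall.compl)]
          rw [integral_indicator measurableSet_closedBall,
            integral_indicator measurableSet_closedBall.compl]
          rw [integral_const_mul, integral_const_mul, hBR]
      _ ≤ ε * R * c + δ * τ := by nlinarith [mul_nonneg hε.le hRpos.le]
  -- conclusion
  rw [hbary, hIsplit]
  have hsub : den⁻¹ • ((∫ z : E3, G z) + den • y) - y = den⁻¹ • ∫ z : E3, G z := by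
    rw [smul_add, smul_smul, inv_mul_cancel₀ hdenpos.ne', one_smul]
    abel
  rw [hsub, norm_smul, Real.norm_eq_abs, abs_of_pos (inv_pos.2 hdenpos)]
  have h1 : den⁻¹ ≤ (c/2)⁻¹ := by
    apply inv_anti₀ (by positivity) hden2
  have h2 : den⁻¹ * ‖∫ z : E3, G z‖ ≤ (c/2)⁻¹ * (ε * R * c + δ * τ) :=
    mul_le_mul h1 hnormI (norm_nonneg _) (by positivity)
  have hδτ : δ * τ < c*ζ/8 := by
    rw [lt_div_iff₀ (by positivity)] at hτζ
    nlinarith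
  have hεRc : ε * R * c < ζ/4 * c := by nlinarith
  have h3 : (c/2)⁻¹ * (ε * R * c + δ * τ) < ζ := by
    rw [inv_mul_lt_iff₀ (by positivity)]
    nlinarith [mul_pos hc hζ]
  linarith
end
end
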